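/- Let σ₁ > 0, σ₂ > 0 and r > 0, and set c = 1/(2σ₂²) − 1/(2σ₁²) and z = (r/4)·(1/σ₂² − 1/σ₁²). Define w : (0, r) → ℝ by w(x) = x^{−1/2}·(r − x)^{−1/2}·exp(−(r − x)/(2σ₂²) − x/(2σ₁²)). Then ∫_0^r x·w(x) dx = (r/2)·(1 + I₁(z)/I₀(z))·∫_0^r w(x) dx. In particular, the conditional expectation of X² given X² + Y² = r, for X ~ N(0, σ₁²) and Y ~ N(0, σ₂²) independent, equals (r/2)·(1 + I₁(z)/I₀(z)). -/

import Mathlib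

/-!
Substituting `x = (r/2)(1 + cos θ)` maps `(0, π)` onto `(0, r)` and turns `dx / √(x (r - x))`
into `dθ`, while the exponent of `w` becomes `K + z cos θ` with a constant `K`. Hence
`∫ w = e^K π I₀(z)` and `∫ x w = e^K (r/2) π (I₀(z) + I₁(z))`, and `I₀(z) > 0` lets us divide.
-/

open MeasureTheory Real Set

/-- Modified Bessel function of the first kind of order 0, via its integral representation. -/
noncomputable def besselI0 (z : ℝ) : ℝ := (1 / π) * ∫ θ in (0:ℝ)..π, Real.exp (z * Real.cos θ)

/-- Modified Bessel function of the first kind of order 1, via its integral representation. -/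
noncomputable def besselI1 (z : ℝ) : ℝ :=
  (1 / π) * ∫ θ in (0:ℝ)..π, Real.exp (z * Real.cos θ) * Real.cos θ

lemma integral_exp_mul_cos (z : ℝ) : ∫ θ in (0:ℝ)..π, exp (z * cos θ) = π * besselI0 z := by
  rw [besselI0]
  field_simp [pi_ne_zero]

lemma integral_exp_mul_cos_mul_cos (z : ℝ) :
    ∫ θ in (0:ℝ)..π, exp (z * cos θ) * cos θ = π * besselI1 z := by
  rw [besselI1]
  field_simp [pi_ne_zero]

lemma integral_one_add_cos_mul_exp_mul_cos (z : ℝ) :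
    ∫ θ in (0:ℝ)..π, (1 + cos θ) * exp (z * cos θ) = π * (besselI0 z + besselI1 z) := by
  simp_rw [add_mul, one_mul, mul_comm (cos _)]
  rw [intervalIntegral.integral_add
      ((by fun_prop : Continuous fun θ => exp (z * cos θ)).intervalIntegrable _ _)
      ((by fun_prop : Continuous fun θ => exp (z * cos θ) * cos θ).intervalIntegrable _ _),
    integral_exp_mul_cos, integral_exp_mul_cos_mul_cos, mul_add]

lemma besselI0_pos (z : ℝ) : 0 < besselI0 z := by
  have hint : 0 < ∫ θ in (0:ℝ)..π, exp (z * cos θ) :=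
    intervalIntegral.intervalIntegral_pos_of_pos_on
      ((by fun_prop : Continuous fun θ => exp (z * cos θ)).intervalIntegrable _ _)
      (fun θ _ => exp_pos _) pi_pos
  rw [besselI0]
  positivity

section ArcsineSubstitution

variable {r : ℝ}

lemma image_half_mul_one_add_cos_Ioo (hr : 0 < r) :
    (fun θ => r / 2 * (1 + cos θ)) '' Ioo 0 π = Ioo 0 r := by
  have hcomp : (fun θ => r / 2 * (1 + cos θ)) = (r / 2 * · + r / 2) ∘ cos := by
    funext θ
    simp only [Function.comp_apply]
    ring
  have hcos : cos '' Ioo 0 π = Ioo (-1) 1 := cosPartialHomeomorph.image_source_eq_target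
  rw [hcomp, image_comp, hcos, image_affine_Ioo (half_pos hr)]
  congr 1 <;> ring

lemma injOn_half_mul_one_add_cos (hr : 0 < r) :
    InjOn (fun θ => r / 2 * (1 + cos θ)) (Ioo 0 π) := by
  intro a ha b hb hab
  refine injOn_cos ⟨ha.1.le, ha.2.le⟩ ⟨hb.1.le, hb.2.le⟩ ?_
  simpa using mul_left_cancel₀ (half_pos hr).ne' hab

lemma sqrt_mul_sqrt_sub_half_mul_one_add_cos (hr : 0 ≤ r) {θ : ℝ} (hθ : θ ∈ Icc 0 π) :
    √(r / 2 * (1 + cos θ)) * √(r - r / 2 * (1 + cos θ)) = r / 2 * sin θ := by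
  have hprod : r / 2 * (1 + cos θ) * (r - r / 2 * (1 + cos θ)) = (r / 2 * sin θ) ^ 2 := by
    linear_combination (-(r / 2) ^ 2) * sin_sq_add_cos_sq θ
  have hsin : 0 ≤ sin θ := sin_nonneg_of_nonneg_of_le_pi hθ.1 hθ.2
  rw [← sqrt_mul (by nlinarith [neg_one_le_cos θ]), hprod, sqrt_sq (by positivity)]

theorem setIntegral_div_sqrt_mul_sqrt_sub (hr : 0 < r) (φ : ℝ → ℝ) :
    ∫ x in Ioo 0 r, φ x / (√x * √(r - x)) = ∫ θ in (0:ℝ)..π, φ (r / 2 * (1 + cos θ)) := by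
  have hderiv : ∀ θ ∈ Ioo 0 π,
      HasDerivWithinAt (fun θ => r / 2 * (1 + cos θ)) (r / 2 * -sin θ) (Ioo 0 π) θ :=
    fun θ _ => (((hasDerivAt_cos θ).const_add 1).const_mul (r / 2)).hasDerivWithinAt
  rw [← image_half_mul_one_add_cos_Ioo hr, integral_image_eq_integral_abs_deriv_smul
      measurableSet_Ioo hderiv (injOn_half_mul_one_add_cos hr),
    intervalIntegral.integral_of_le pi_pos.le, integral_Ioc_eq_integral_Ioo]
  refine setIntegral_congr_fun measurableSet_Ioo fun θ hθ => ?_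
  have hsin : 0 < r / 2 * sin θ := mul_pos (half_pos hr) (sin_pos_of_pos_of_lt_pi hθ.1 hθ.2)
  rw [smul_eq_mul, sqrt_mul_sqrt_sub_half_mul_one_add_cos hr.le (Ioo_subset_Icc_self hθ),
    mul_neg, abs_neg, abs_of_pos hsin, mul_div_cancel₀ _ hsin.ne']

end ArcsineSubstitution

theorem hoyt_conditional_second_moment_general
    (σ₁ σ₂ r : ℝ) (hr : 0 < r)
    (z : ℝ)
    (hz : z = (r / 4) * (1 / σ₂ ^ 2 - 1 / σ₁ ^ 2))
    (w : ℝ → ℝ)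
    (hw : ∀ x : ℝ, w x =
      Real.exp (-(r - x) / (2 * σ₂ ^ 2) - x / (2 * σ₁ ^ 2)) /
        (Real.sqrt x * Real.sqrt (r - x))) :
    ∫ x in Set.Ioo 0 r, x * w x =
      (r / 2) * (1 + besselI1 z / besselI0 z) * ∫ x in Set.Ioo 0 r, w x := by
  set K := -(r / (4 * σ₂ ^ 2)) - r / (4 * σ₁ ^ 2)
  have hexp : ∀ θ, exp (-(r - r / 2 * (1 + cos θ)) / (2 * σ₂ ^ 2) - r / 2 * (1 + cos θ) /
      (2 * σ₁ ^ 2)) = exp K * exp (z * cos θ) := by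
    intro θ
    rw [← exp_add, hz]
    congr 1
    simp only [K]
    ring
  have hmass : ∫ x in Ioo 0 r, w x = exp K * (π * besselI0 z) := by
    simp_rw [hw, setIntegral_div_sqrt_mul_sqrt_sub hr, hexp, intervalIntegral.integral_const_mul,
      integral_exp_mul_cos]
  have hmoment : ∫ x in Ioo 0 r, x * w x = r / 2 * exp K * (π * (besselI0 z + besselI1 z)) := by
    simp_rw [hw, ← mul_div_assoc, setIntegral_div_sqrt_mul_sqrt_sub hr (fun x => x * exp _), hexp,
      show ∀ θ, r / 2 * (1 + cos θ) * (exp K * exp (z * cos θ))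
        = r / 2 * exp K * ((1 + cos θ) * exp (z * cos θ)) from fun θ => by ring]
    rw [intervalIntegral.integral_const_mul, integral_one_add_cos_mul_exp_mul_cos]
  rw [hmass, hmoment]
  field_simp [(besselI0_pos z).ne']

theorem hoyt_conditional_second_moment
    (σ₁ σ₂ r : ℝ) (hσ₁ : 0 < σ₁) (hσ₂ : 0 < σ₂) (hr : 0 < r)
    (c z : ℝ)
    (hc : c = 1 / (2 * σ₂ ^ 2) - 1 / (2 * σ₁ ^ 2))
    (hz : z = (r / 4) * (1 / σ₂ ^ 2 - 1 / σ₁ ^ 2))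
    (w : ℝ → ℝ)
    (hw : ∀ x : ℝ, w x =
      Real.exp (-(r - x) / (2 * σ₂ ^ 2) - x / (2 * σ₁ ^ 2)) /
        (Real.sqrt x * Real.sqrt (r - x))) :
    ∫ x in Set.Ioo 0 r, x * w x =
      (r / 2) * (1 + besselI1 z / besselI0 z) * ∫ x in Set.Ioo 0 r, w x :=
  hoyt_conditional_second_moment_general σ₁ σ₂ r hr z hz w hw
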